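/- Suppose the roots λ_1,…,λ_m of the characteristic polynomial α^{(m)} λ^m + ⋯ + α^{(0)} are distinct, and that moreover the C(m,l) products λ_υ := λ_{υ_1}⋯λ_{υ_l} (over multi-indices 1 ≤ υ_1 < … < υ_l ≤ m) are pairwise distinct. Fix row indices 1 ≤ μ_1 < … < μ_l ≤ m and suppose det [λ_{υ_j}^{μ_i−1}]_{i,j=1,…,l} ≠ 0 for every multi-index υ. Then the polynomial ∑_{k=0}^{C(m,l)} (−1)^k det[ det(Ψ^j)^{(μ,ν)} ]_{j=0,…,k̂,…,C(m,l); 1 ≤ ν_1 < … < ν_l ≤ m} λ^k (where Ψ is the companion matrix of the recurrence, k̂ means the index k is omitted, and Ψ^0 is the identity) equals a non-zero constant multiple of ∏_{1 ≤ υ_1 < … < υ_l ≤ m} (λ − λ_υ); in particular its leading and constant coefficients are non-zero. -/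
import Mathlib

open Matrix Polynomial Finset

section CauchyBinet

variable {l m : ℕ} {R : Type*} [CommRing R]

theorem det_mul_expand' (A : Matrix (Fin l) (Fin m) R) (B : Matrix (Fin m) (Fin l) R) :
    (A * B).det = ∑ g : Fin l → Fin m, (∏ i, A i (g i)) * (B.submatrix g id).det := by
  have h1 : (A * B : Matrix (Fin l) (Fin l) R) = fun i => ∑ k, A i k • B k := by
    funext i j
    simp [Matrix.mul_apply]
  have h2 := (detRowAlternating : (Fin l → R) [⋀^Fin l]→ₗ[R] R).toMultilinearMap.map_sum
    (α := fun _ : Fin l => Fin m) (g := fun i k => A i k • B k)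
  rw [show (A * B).det = detRowAlternating (A * B : Matrix (Fin l) (Fin l) R) from rfl, h1]
  rw [show (detRowAlternating (fun i => ∑ k, A i k • B k : Matrix (Fin l) (Fin l) R)) =
    ((detRowAlternating : (Fin l → R) [⋀^Fin l]→ₗ[R] R).toMultilinearMap
      fun i => ∑ k : Fin m, (fun i k => A i k • B k) i k) from rfl, h2]
  refine Finset.sum_congr rfl fun g _ => ?_
  rw [(detRowAlternating : (Fin l → R) [⋀^Fin l]→ₗ[R] R).toMultilinearMap.map_smul_univ]
  simp only [smul_eq_mul]
  rfl

theorem det_eq_sum_perm_col' (M : Matrix (Fin l) (Fin l) R) :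
    M.det = ∑ σ : Equiv.Perm (Fin l), ((Equiv.Perm.sign σ : ℤ) : R) * ∏ i, M i (σ i) := by
  rw [← Matrix.det_transpose, Matrix.det_apply']
  rfl

theorem cauchyBinet (A : Matrix (Fin l) (Fin m) R) (B : Matrix (Fin m) (Fin l) R) :
    (A * B).det = ∑ s : {s : Finset (Fin m) // s.card = l},
      (A.submatrix id (s.1.orderEmbOfFin s.2)).det *
        (B.submatrix (s.1.orderEmbOfFin s.2) id).det := by
  rw [det_mul_expand']
  rw [← Finset.sum_filter_of_ne (p := fun g : Fin l → Fin m => Function.Injective g)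
    (fun g _ hne => by
      by_contra hni
      apply hne
      obtain ⟨i, j, hij, hne'⟩ : ∃ i j, g i = g j ∧ i ≠ j := by
        simp only [Function.Injective] at hni
        push_neg at hni
        exact hni
      rw [Matrix.det_zero_of_row_eq hne' (by
        funext k
        simp [Matrix.submatrix_apply, hij]), mul_zero])]
  rw [← Finset.sum_subtype_eq_sum_filter, Finset.subtype_univ]
  have key : ∀ p : {s : Finset (Fin m) // s.card = l} × Equiv.Perm (Fin l),
      (((Equiv.Perm.sign p.2 : ℤ) : R) * ∏ i, A i (p.1.1.orderEmbOfFin p.1.2 (p.2 i))) *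
        (B.submatrix (p.1.1.orderEmbOfFin p.1.2) id).det
      = (∏ i, A i ((p.1.1.orderEmbOfFin p.1.2 ∘ p.2) i)) *
          (B.submatrix (p.1.1.orderEmbOfFin p.1.2 ∘ p.2) id).det := by
    intro p
    have : B.submatrix (p.1.1.orderEmbOfFin p.1.2 ∘ p.2) id
        = (B.submatrix (p.1.1.orderEmbOfFin p.1.2) id).submatrix p.2 id := by
      funext a b; simp
    rw [this, Matrix.det_permute]
    simp only [Function.comp_apply]
    ring
  have hbij : Function.Bijective
      (fun p : {s : Finset (Fin m) // s.card = l} × Equiv.Perm (Fin l) =>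
        (⟨p.1.1.orderEmbOfFin p.1.2 ∘ p.2,
          (p.1.1.orderEmbOfFin p.1.2).injective.comp p.2.injective⟩ :
          {g : Fin l → Fin m // Function.Injective g})) := by
    constructor
    · rintro ⟨⟨s, hs⟩, σ⟩ ⟨⟨t, ht⟩, τ⟩ h
      simp only [Subtype.mk.injEq] at h
      have hst : s = t := by
        have h1 : Set.range (s.orderEmbOfFin hs ∘ σ) = Set.range (t.orderEmbOfFin ht ∘ τ) := by
          rw [h]
        rw [Set.range_comp, Set.range_comp, σ.range_eq_univ, τ.range_eq_univ,
          Set.image_univ, Set.image_univ, Finset.range_orderEmbOfFin,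
          Finset.range_orderEmbOfFin] at h1
        exact_mod_cast Finset.coe_injective h1
      subst hst
      have hσ : σ = τ := by
        apply Equiv.ext
        intro i
        have := congrFun h i
        exact (s.orderEmbOfFin hs).injective this
      simp [hσ]
    · rintro ⟨g, hg⟩
      set s : Finset (Fin m) := Finset.univ.image g with hs_def
      have hs : s.card = l := by
        rw [hs_def, Finset.card_image_of_injective _ hg, Finset.card_univ, Fintype.card_fin]
      have hmem : ∀ i, g i ∈ s := fun i => Finset.mem_image_of_mem g (Finset.mem_univ i)
      have hg' : Function.Injective (fun i => (⟨g i, hmem i⟩ : {x // x ∈ s})) := by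
        intro a b hab
        exact hg (congrArg Subtype.val hab)
      have hbij' : Function.Bijective (fun i => (⟨g i, hmem i⟩ : {x // x ∈ s})) :=
        (Fintype.bijective_iff_injective_and_card _).2
          ⟨hg', by simp [Fintype.card_coe, hs]⟩
      set E : Fin l ≃ {x // x ∈ s} := Equiv.ofBijective _ hbij'
      refine ⟨⟨⟨s, hs⟩, E.trans (s.orderIsoOfFin hs).toEquiv.symm⟩, ?_⟩
      apply Subtype.ext
      funext i
      simp only [Function.comp_apply, Equiv.trans_apply]
      rw [← Finset.coe_orderIsoOfFin_apply]
      simp [E]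
  calc ∑ g : {g : Fin l → Fin m // Function.Injective g},
        (∏ i, A i (g.1 i)) * (B.submatrix g.1 id).det
      = ∑ p : {s : Finset (Fin m) // s.card = l} × Equiv.Perm (Fin l),
          (((Equiv.Perm.sign p.2 : ℤ) : R) * ∏ i, A i (p.1.1.orderEmbOfFin p.1.2 (p.2 i))) *
            (B.submatrix (p.1.1.orderEmbOfFin p.1.2) id).det := by
        refine (Fintype.sum_bijective _ hbij _ _ fun p => ?_).symm
        rw [key p]
    _ = ∑ s : {s : Finset (Fin m) // s.card = l},
          (A.submatrix id (s.1.orderEmbOfFin s.2)).det *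
            (B.submatrix (s.1.orderEmbOfFin s.2) id).det := by
        rw [Fintype.sum_prod_type]
        refine Finset.sum_congr rfl fun s _ => ?_
        rw [det_eq_sum_perm_col', Finset.sum_mul]
        refine Finset.sum_congr rfl fun σ _ => ?_
        simp [Matrix.submatrix_apply]

theorem cauchyBinet_minor (A B : Matrix (Fin m) (Fin m) R) (μ ν : Fin l → Fin m) :
    ((A * B).submatrix μ ν).det = ∑ s : {s : Finset (Fin m) // s.card = l},
      (A.submatrix μ (s.1.orderEmbOfFin s.2)).det *
        (B.submatrix (s.1.orderEmbOfFin s.2) ν).det := by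
  rw [Matrix.submatrix_mul A B μ id ν Function.bijective_id, cauchyBinet]
  simp [Matrix.submatrix_submatrix, Function.comp_def]

theorem prod_embS {s : Finset (Fin m)} (hs : s.card = l) (f : Fin m → R) :
    ∏ b : Fin l, f (s.orderEmbOfFin hs b) = ∏ x ∈ s, f x := by
  rw [← Finset.prod_coe_sort s f]
  exact Fintype.prod_equiv (s.orderIsoOfFin hs).toEquiv _ _ (fun i => by
    rw [← Finset.coe_orderIsoOfFin_apply s hs i]; rfl)

theorem det_one_minor (s t : {s : Finset (Fin m) // s.card = l}) :
    ((1 : Matrix (Fin m) (Fin m) R).submatrix (s.1.orderEmbOfFin s.2)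
        (t.1.orderEmbOfFin t.2)).det = if s = t then 1 else 0 := by
  by_cases h : s = t
  · subst h
    rw [if_pos rfl]
    have h1 : (1 : Matrix (Fin m) (Fin m) R).submatrix (s.1.orderEmbOfFin s.2)
        (s.1.orderEmbOfFin s.2) = 1 := by
      ext a b
      simp [Matrix.submatrix_apply, Matrix.one_apply,
        (s.1.orderEmbOfFin s.2).injective.eq_iff]
    rw [h1, Matrix.det_one]
  · rw [if_neg h]
    have hts : ¬ t.1 ⊆ s.1 := by
      intro hsub
      exact h (Subtype.ext (Finset.eq_of_subset_of_card_le hsub (by rw [s.2, t.2])).symm)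
    obtain ⟨x, hxt, hxs⟩ := Finset.not_subset.mp hts
    obtain ⟨b, hb⟩ : ∃ b, t.1.orderEmbOfFin t.2 b = x := by
      have hr : x ∈ Set.range (t.1.orderEmbOfFin t.2) := by
        rw [Finset.range_orderEmbOfFin]; exact hxt
      exact hr
    apply Matrix.det_eq_zero_of_column_eq_zero b
    intro a
    simp only [Matrix.submatrix_apply, Matrix.one_apply]
    rw [hb]
    have hne : s.1.orderEmbOfFin s.2 a ≠ x :=
      fun hh => hxs (hh ▸ Finset.orderEmbOfFin_mem s.1 s.2 a)
    simp [hne]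

theorem pow_mul_eq_of_mul_eq (Ψ V D : Matrix (Fin m) (Fin m) R) (h : Ψ * V = V * D) :
    ∀ j : ℕ, Ψ ^ j * V = V * D ^ j := by
  intro j
  induction j with
  | zero => simp
  | succ j ih =>
    rw [pow_succ, pow_succ, Matrix.mul_assoc, h, ← Matrix.mul_assoc, ih, Matrix.mul_assoc]

end CauchyBinet


open Matrix Polynomial

/-- The polynomial `∑_{k=0}^{C(m,l)} (-1)^k det[ det (Ψ^j)^{(μ,ν)} ]_{j≠k; ν} X^k`
whose coefficients are the determinants, over the row range `j ∈ {0,…,C(m,l)} \ {k}`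
and the column multi-indices `ν` (enumerated by the fixed ordering `e`), of the
`l × l` minors, with rows `μs` and columns `ν`, of the powers `Ψ^j` of the companion
matrix (`Ψ^0` being the identity). -/
noncomputable def compoundPoly (m l : ℕ) (Ψ : Matrix (Fin m) (Fin m) ℂ)
    (μs : Fin l → Fin m)
    (e : Fin (Nat.choose m l) ≃ {s : Finset (Fin m) // s.card = l}) : Polynomial ℂ :=
  ∑ k : Fin (Nat.choose m l + 1),
    C ((-1 : ℂ) ^ (k : ℕ) *
        (Matrix.of fun (j ν : Fin (Nat.choose m l)) =>
          (Matrix.of fun (a b : Fin l) =>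
            (Ψ ^ ((k.succAbove j : Fin (Nat.choose m l + 1)) : ℕ))
              (μs a) ((e ν).1.orderEmbOfFin (e ν).2 b)).det).det)
      * X ^ (k : ℕ)

/-- **Section 3.4.** Suppose the roots `lam i` of the characteristic polynomial
`∑_j α j * λ^j` are distinct, the `C(m,l)` products `λ_υ = ∏_{i ∈ υ} lam i` are
pairwise distinct, and for the fixed strictly increasing row multi-index `μs` all
the determinants `det [lam (υ b) ^ (μs a)]` are non-zero.  Then the polynomial
`compoundPoly` (equation (3.9) of the paper, built from the companion matrix `Ψ`)
is a non-zero constant multiple of `∏_υ (λ - λ_υ)`; in particular its constant and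
leading coefficients are non-zero. -/
theorem stmt_12 (m l : ℕ) (hm : 1 ≤ m) (hl : 1 ≤ l) (hlm : l ≤ m)
    (α : Fin (m + 1) → ℂ) (hα : α 0 * α (Fin.last m) ≠ 0)
    (Ψ : Matrix (Fin m) (Fin m) ℂ)
    (hΨ : ∀ i j : Fin m, Ψ i j =
      if (i : ℕ) + 1 = m then - α (Fin.castSucc j) / α (Fin.last m)
      else if (j : ℕ) = (i : ℕ) + 1 then 1 else 0)
    (lam : Fin m → ℂ)
    (hroot : ∀ i : Fin m, ∑ j : Fin (m + 1), α j * lam i ^ (j : ℕ) = 0)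
    (hdist : Function.Injective lam)
    (hproddist : Function.Injective
      fun s : {s : Finset (Fin m) // s.card = l} => ∏ i ∈ s.1, lam i)
    (μs : Fin l → Fin m) (hμ : StrictMono μs)
    (hc : ∀ s : {s : Finset (Fin m) // s.card = l},
      (Matrix.of fun (a b : Fin l) =>
        lam (s.1.orderEmbOfFin s.2 b) ^ (μs a : ℕ)).det ≠ 0)
    (e : Fin (Nat.choose m l) ≃ {s : Finset (Fin m) // s.card = l}) :
    (∃ c : ℂ, c ≠ 0 ∧
      compoundPoly m l Ψ μs e =
        C c * ∏ s : {s : Finset (Fin m) // s.card = l}, (X - C (∏ i ∈ s.1, lam i)))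
    ∧ (compoundPoly m l Ψ μs e).coeff 0 ≠ 0
    ∧ (compoundPoly m l Ψ μs e).coeff (Nat.choose m l) ≠ 0 := by
  classical
  have hα0 : α 0 ≠ 0 := fun h0 => hα (by rw [h0, zero_mul])
  have hαm : α (Fin.last m) ≠ 0 := fun h0 => hα (by rw [h0, mul_zero])
  have hlam0 : ∀ i, lam i ≠ 0 := by
    intro i h0
    apply hα0
    have hr := hroot i
    rw [h0] at hr
    rw [Fin.sum_univ_succ] at hr
    simpa using hr
  set V : Matrix (Fin m) (Fin m) ℂ := Matrix.of fun i j => lam j ^ (i : ℕ) with hV_def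
  have hVdet : V.det ≠ 0 := by
    have h1 : Vᵀ = Matrix.vandermonde lam := by
      ext i j
      simp [hV_def, Matrix.vandermonde]
    rw [← Matrix.det_transpose, h1]
    exact Matrix.det_vandermonde_ne_zero_iff.mpr hdist
  have hVunit : IsUnit V.det := isUnit_iff_ne_zero.mpr hVdet
  have hVV1 : V * V⁻¹ = 1 := Matrix.mul_nonsing_inv V hVunit
  have hV1V : V⁻¹ * V = 1 := Matrix.nonsing_inv_mul V hVunit
  -- `Ψ * V = V * diagonal lam`
  have hΨV : Ψ * V = V * Matrix.diagonal lam := by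
    ext i j
    rw [Matrix.mul_apply, Matrix.mul_diagonal]
    by_cases hi : (i : ℕ) + 1 = m
    · have hterm : ∀ k : Fin m, Ψ i k * V k j
          = -(α (Fin.castSucc k) * lam j ^ (k : ℕ)) / α (Fin.last m) := by
        intro k
        rw [hΨ i k, if_pos hi]
        simp only [hV_def, Matrix.of_apply]
        field_simp
      rw [Finset.sum_congr rfl fun k _ => hterm k]
      have hr := hroot j
      rw [Fin.sum_univ_castSucc] at hr
      have hsum : ∑ k : Fin m, α (Fin.castSucc k) * lam j ^ (k : ℕ)
          = -(α (Fin.last m) * lam j ^ m) := by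
        simp only [Fin.coe_castSucc, Fin.val_last] at hr
        linear_combination hr
      rw [← Finset.sum_div, Finset.sum_neg_distrib, hsum]
      rw [neg_neg]
      have hVij : V i j * lam j = lam j ^ m := by
        simp only [hV_def, Matrix.of_apply, ← pow_succ, hi]
      rw [hVij]
      field_simp
    · have him : (i : ℕ) + 1 < m := lt_of_le_of_ne i.isLt hi
      have hterm : ∀ k : Fin m, Ψ i k * V k j
          = if k = (⟨(i : ℕ) + 1, him⟩ : Fin m) then lam j ^ ((i : ℕ) + 1) else 0 := by
        intro k
        rw [hΨ i k, if_neg hi]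
        by_cases hk : (k : ℕ) = (i : ℕ) + 1
        · rw [if_pos hk, if_pos (Fin.ext hk), one_mul]
          simp [hV_def, hk]
        · rw [if_neg hk, if_neg (fun hh => hk (by rw [hh])), zero_mul]
      rw [Finset.sum_congr rfl fun k _ => hterm k,
        Finset.sum_ite_eq' Finset.univ (⟨(i : ℕ) + 1, him⟩ : Fin m)]
      simp [hV_def, pow_succ]
  have hpowV : ∀ j : ℕ, Ψ ^ j = V * Matrix.diagonal lam ^ j * V⁻¹ := by
    intro j
    calc Ψ ^ j = Ψ ^ j * (V * V⁻¹) := by rw [hVV1, Matrix.mul_one]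
      _ = (Ψ ^ j * V) * V⁻¹ := by rw [Matrix.mul_assoc]
      _ = V * Matrix.diagonal lam ^ j * V⁻¹ := by
          rw [pow_mul_eq_of_mul_eq Ψ V (Matrix.diagonal lam) hΨV j]
  -- minors of powers
  set Λ : {s : Finset (Fin m) // s.card = l} → ℂ := fun s => ∏ i ∈ s.1, lam i with hΛ_def
  set aval : {s : Finset (Fin m) // s.card = l} → ℂ :=
    fun s => (V.submatrix μs (s.1.orderEmbOfFin s.2)).det with haval_def
  set bval : {s : Finset (Fin m) // s.card = l} → {s : Finset (Fin m) // s.card = l} → ℂ :=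
    fun s t => ((V⁻¹).submatrix (s.1.orderEmbOfFin s.2) (t.1.orderEmbOfFin t.2)).det
    with hbval_def
  have haval : ∀ s, aval s ≠ 0 := fun s => hc s
  have hminor : ∀ (j : ℕ) (t : {s : Finset (Fin m) // s.card = l}),
      ((Ψ ^ j).submatrix μs (t.1.orderEmbOfFin t.2)).det
        = ∑ s : {s : Finset (Fin m) // s.card = l}, aval s * (Λ s ^ j * bval s t) := by
    intro j t
    rw [hpowV j, Matrix.mul_assoc, cauchyBinet_minor]
    refine Finset.sum_congr rfl fun s _ => ?_
    congr 1
    have hm1 : (Matrix.diagonal lam ^ j * V⁻¹).submatrix (s.1.orderEmbOfFin s.2)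
          (t.1.orderEmbOfFin t.2)
        = Matrix.of fun a b => (lam (s.1.orderEmbOfFin s.2 a)) ^ j *
            ((V⁻¹).submatrix (s.1.orderEmbOfFin s.2) (t.1.orderEmbOfFin t.2)) a b := by
      ext a b
      simp [Matrix.diagonal_pow, Matrix.diagonal_mul, Matrix.submatrix_apply, Pi.pow_apply]
    rw [hm1, Matrix.det_mul_column]
    congr 1
    rw [show (∏ a : Fin l, lam (s.1.orderEmbOfFin s.2 a) ^ j)
        = ∏ a : Fin l, (fun x => lam x ^ j) (s.1.orderEmbOfFin s.2 a) from rfl,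
      prod_embS s.2 (fun x => lam x ^ j), hΛ_def, ← Finset.prod_pow]
  -- the coefficient matrices factor
  set Λ' : Fin (Nat.choose m l) → ℂ := fun cc => Λ (e cc) with hΛ'_def
  set W : Fin (Nat.choose m l + 1) → Matrix (Fin (Nat.choose m l)) (Fin (Nat.choose m l)) ℂ :=
    fun k => Matrix.of fun jj cc =>
      Λ' cc ^ ((k.succAbove jj : Fin (Nat.choose m l + 1)) : ℕ) with hW_def
  set Cmat : Matrix (Fin (Nat.choose m l)) (Fin (Nat.choose m l)) ℂ :=
    Matrix.of fun ss νν => aval (e ss) * bval (e ss) (e νν) with hCmat_def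
  have hMk : ∀ k : Fin (Nat.choose m l + 1),
      (Matrix.of fun (j ν : Fin (Nat.choose m l)) =>
        (Matrix.of fun (a b : Fin l) =>
          (Ψ ^ ((k.succAbove j : Fin (Nat.choose m l + 1)) : ℕ))
            (μs a) ((e ν).1.orderEmbOfFin (e ν).2 b)).det).det
      = (W k).det * Cmat.det := by
    intro k
    rw [← Matrix.det_mul]
    congr 1
    ext jj νν
    rw [Matrix.mul_apply]
    have h1 : (Matrix.of fun (a b : Fin l) =>
        (Ψ ^ ((k.succAbove jj : Fin (Nat.choose m l + 1)) : ℕ))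
          (μs a) ((e νν).1.orderEmbOfFin (e νν).2 b)).det
        = ((Ψ ^ ((k.succAbove jj : Fin (Nat.choose m l + 1)) : ℕ)).submatrix μs
            ((e νν).1.orderEmbOfFin (e νν).2)).det := rfl
    rw [Matrix.of_apply, h1, hminor]
    rw [← Equiv.sum_comp e
      (fun s => aval s * (Λ s ^ ((k.succAbove jj : Fin (Nat.choose m l + 1)) : ℕ) * bval s (e νν)))]
    refine Finset.sum_congr rfl fun ss _ => ?_
    simp only [hW_def, hCmat_def, hΛ'_def, Matrix.of_apply]
    ring
  -- `Cmat` has non-zero determinant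
  have hCdet : Cmat.det ≠ 0 := by
    set Bmat : Matrix (Fin (Nat.choose m l)) (Fin (Nat.choose m l)) ℂ :=
      Matrix.of fun ss νν => bval (e ss) (e νν) with hBmat_def
    set Amat : Matrix (Fin (Nat.choose m l)) (Fin (Nat.choose m l)) ℂ :=
      Matrix.of fun ss νν =>
        (V.submatrix ((e ss).1.orderEmbOfFin (e ss).2) ((e νν).1.orderEmbOfFin (e νν).2)).det
      with hAmat_def
    have hBA : Bmat * Amat = 1 := by
      ext ii νν
      rw [Matrix.mul_apply]
      have hcb := cauchyBinet_minor (V⁻¹) V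
        ((e ii).1.orderEmbOfFin (e ii).2) ((e νν).1.orderEmbOfFin (e νν).2)
      rw [hV1V] at hcb
      have hsum : ∑ jj : Fin (Nat.choose m l), Bmat ii jj * Amat jj νν
          = ∑ s : {s : Finset (Fin m) // s.card = l},
              ((V⁻¹).submatrix ((e ii).1.orderEmbOfFin (e ii).2)
                (s.1.orderEmbOfFin s.2)).det *
              (V.submatrix (s.1.orderEmbOfFin s.2)
                ((e νν).1.orderEmbOfFin (e νν).2)).det :=
        Fintype.sum_equiv e _ _ (fun jj => rfl)
      rw [hsum, ← hcb, det_one_minor (e ii) (e νν)]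
      rw [Matrix.one_apply]
      simp [e.apply_eq_iff_eq]
    have hBdet : Bmat.det ≠ 0 := by
      intro h0
      have := congrArg Matrix.det hBA
      rw [Matrix.det_mul, Matrix.det_one, h0, zero_mul] at this
      exact zero_ne_one this
    have hCB : Cmat.det = (∏ ss, aval (e ss)) * Bmat.det := by
      rw [hCmat_def, hBmat_def]
      exact Matrix.det_mul_column _ _
    rw [hCB]
    exact mul_ne_zero (Finset.prod_ne_zero_iff.mpr fun ss _ => haval (e ss)) hBdet
  -- the Vandermonde constant
  set c₀ : ℂ := ∏ i : Fin (Nat.choose m l), ∏ j ∈ Finset.Ioi i, (Λ' j - Λ' i) with hc₀_def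
  have hΛ'inj : Function.Injective Λ' := hproddist.comp e.injective
  have hc₀ : c₀ ≠ 0 := by
    rw [hc₀_def]
    refine Finset.prod_ne_zero_iff.mpr fun i _ => Finset.prod_ne_zero_iff.mpr fun j hj => ?_
    have hij : i ≠ j := ne_of_lt (Finset.mem_Ioi.mp hj)
    exact sub_ne_zero_of_ne fun hh => hij (hΛ'inj hh).symm
  set c : ℂ := Cmat.det * ((-1 : ℂ) ^ Nat.choose m l * c₀) with hc_def
  have hcne : c ≠ 0 := mul_ne_zero hCdet
    (mul_ne_zero (pow_ne_zero _ (neg_ne_zero.mpr one_ne_zero)) hc₀)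
  -- evaluation of the modified-Vandermonde determinant
  have hdetW : ∀ x : ℂ, ∑ k : Fin (Nat.choose m l + 1),
      (-1 : ℂ) ^ (k : ℕ) * x ^ (k : ℕ) * (W k).det
      = (∏ cc : Fin (Nat.choose m l), (Λ' cc - x)) * c₀ := by
    intro x
    set v : Fin (Nat.choose m l + 1) → ℂ := Fin.cases x (fun cc => Λ' cc) with hv_def
    have hT : (Matrix.vandermonde v)ᵀ.det = ∑ k : Fin (Nat.choose m l + 1),
        (-1 : ℂ) ^ (k : ℕ) * x ^ (k : ℕ) * (W k).det := by
      rw [Matrix.det_succ_column_zero]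
      refine Finset.sum_congr rfl fun k _ => ?_
      have e1 : (Matrix.vandermonde v)ᵀ k 0 = x ^ (k : ℕ) := by
        simp [Matrix.vandermonde, hv_def]
      have e2 : (Matrix.vandermonde v)ᵀ.submatrix k.succAbove Fin.succ = W k := by
        ext jj cc
        simp [Matrix.vandermonde, hv_def, hW_def]
      rw [e1, e2]
    rw [← hT, Matrix.det_transpose, Matrix.det_vandermonde]
    rw [Fin.prod_univ_succ]
    congr 1
    · rw [Fin.prod_Ioi_zero]
      refine Finset.prod_congr rfl fun cc _ => ?_
      simp [hv_def]
    · rw [hc₀_def]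
      refine Finset.prod_congr rfl fun i _ => ?_
      rw [Fin.prod_Ioi_succ]
      refine Finset.prod_congr rfl fun j _ => ?_
      simp [hv_def]
  -- the polynomial identity
  have hpoly : compoundPoly m l Ψ μs e
      = C c * ∏ s : {s : Finset (Fin m) // s.card = l}, (X - C (∏ i ∈ s.1, lam i)) := by
    apply Polynomial.funext
    intro x
    simp only [compoundPoly]
    rw [Polynomial.eval_finset_sum]
    simp only [Polynomial.eval_mul, Polynomial.eval_C, Polynomial.eval_pow, Polynomial.eval_X]
    simp only [hMk]
    rw [Polynomial.eval_prod]
    simp only [Polynomial.eval_sub, Polynomial.eval_X, Polynomial.eval_C]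
    have h2 : ∑ k : Fin (Nat.choose m l + 1),
        (-1 : ℂ) ^ (k : ℕ) * ((W k).det * Cmat.det) * x ^ (k : ℕ)
        = Cmat.det * ∑ k : Fin (Nat.choose m l + 1),
            (-1 : ℂ) ^ (k : ℕ) * x ^ (k : ℕ) * (W k).det := by
      rw [Finset.mul_sum]
      exact Finset.sum_congr rfl fun k _ => by ring
    rw [h2, hdetW x]
    have h3 : (∏ cc : Fin (Nat.choose m l), (Λ' cc - x))
        = (-1 : ℂ) ^ Nat.choose m l * ∏ cc : Fin (Nat.choose m l), (x - Λ' cc) := by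
      rw [Finset.prod_congr rfl (fun cc _ => show Λ' cc - x = (-1) * (x - Λ' cc) by ring),
        Finset.prod_mul_distrib, Finset.prod_const, Finset.card_univ, Fintype.card_fin]
    have h4 : ∏ s : {s : Finset (Fin m) // s.card = l}, (x - ∏ i ∈ s.1, lam i)
        = ∏ cc : Fin (Nat.choose m l), (x - Λ' cc) :=
      (Equiv.prod_comp e (fun s => x - ∏ i ∈ s.1, lam i)).symm
    rw [h3, h4, hc_def]
    ring
  have hcard : Fintype.card {s : Finset (Fin m) // s.card = l} = Nat.choose m l :=
    (Fintype.card_congr e.symm).trans (Fintype.card_fin _)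
  refine ⟨⟨c, hcne, hpoly⟩, ?_, ?_⟩
  · rw [hpoly, Polynomial.coeff_zero_eq_eval_zero, Polynomial.eval_mul, Polynomial.eval_C,
      Polynomial.eval_prod]
    refine mul_ne_zero hcne (Finset.prod_ne_zero_iff.mpr fun s _ => ?_)
    simp only [Polynomial.eval_sub, Polynomial.eval_X, Polynomial.eval_C, zero_sub]
    exact neg_ne_zero.mpr (Finset.prod_ne_zero_iff.mpr fun i _ => hlam0 i)
  · rw [hpoly, Polynomial.coeff_C_mul]
    have hmono : (∏ s : {s : Finset (Fin m) // s.card = l},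
        (X - C (∏ i ∈ s.1, lam i))).Monic :=
      Polynomial.monic_prod_of_monic _ _ fun s _ => Polynomial.monic_X_sub_C _
    have hdeg : (∏ s : {s : Finset (Fin m) // s.card = l},
        (X - C (∏ i ∈ s.1, lam i))).natDegree = Nat.choose m l := by
      rw [Polynomial.natDegree_prod _ _ fun s _ => Polynomial.X_sub_C_ne_zero _]
      rw [Finset.sum_congr rfl fun s _ => Polynomial.natDegree_X_sub_C (R := ℂ) _]
      simp [Finset.card_univ, hcard]
    rw [← hdeg, hmono.coeff_natDegree]
    simpa using hcne
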